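/- There is a universal constant C > 0 such that the following holds. Let f* be an arbitrary probability density on ℝ (symmetry not required). Let ε ∈ ℝ and x ∈ ℝ with f_r(x) > 0 be such that (20·|ε|/r)·√(log(1/(r·f_r(x)))) < 1. Then |s_r(x + ε) − s_r(x)| ≤ C·(|ε|/r²)·log(1/(r·f_r(x))). -/

import Mathlib

/-
Write `L(x) = log (1 / (r f_r(x)))`, so that `f_r(x) = e^{-L(x)} / r`. Splitting the integrals
for `f_r'` and `f_r''` at `|x - y| = 2 √L r`, the Gaussian tail beyond that point contributes
at most `e^{-L} = r f_r(x)`; hence `|f_r'| ≲ √L f_r / r` and `|f_r''| ≲ L f_r / r²`, which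
give `|s_r| ≲ √L / r` and `|s_r'| = |f_r'' / f_r - s_r²| ≲ L / r²`. Since `L' = -s_r`, the
function `√L` is `2 / r`-Lipschitz, so under the hypothesis `L` at most doubles between `x`
and `x + ε`, and the mean value theorem concludes.
-/

open MeasureTheory Real Filter

/-- Density of the Gaussian `N(0, r²)`. -/
noncomputable def gaussDensity (r x : ℝ) : ℝ :=
  (Real.sqrt (2 * Real.pi * r ^ 2))⁻¹ * Real.exp (-x ^ 2 / (2 * r ^ 2))

/-- The `r`-smoothed density `f_r(x) = ∫ f(y) w_r(x − y) dy`. -/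
noncomputable def smoothed (f : ℝ → ℝ) (r x : ℝ) : ℝ :=
  ∫ y, f y * gaussDensity r (x - y)

/-- The score function `s_r(x) = f_r'(x) / f_r(x)` of the smoothed density. -/
noncomputable def score (f : ℝ → ℝ) (r x : ℝ) : ℝ :=
  deriv (smoothed f r) x / smoothed f r x

/-- The `r`-smoothed Fisher information `I_r = E_{x∼f_r}[s_r(x)²]`. -/
noncomputable def fisherInfo (f : ℝ → ℝ) (r : ℝ) : ℝ :=
  ∫ x, smoothed f r x * score f r x ^ 2

/-- The measure on ℝ with density `f` with respect to Lebesgue measure. -/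
noncomputable def densMeasure (f : ℝ → ℝ) : Measure ℝ :=
  MeasureTheory.volume.withDensity fun x => ENNReal.ofReal (f x)

/-- `f` is a probability density on ℝ. -/
def IsDensity (f : ℝ → ℝ) : Prop :=
  (∀ x, 0 ≤ f x) ∧ MeasureTheory.Integrable f ∧ (∫ x, f x) = 1

/-- The density `f` has mean `μ`. -/
def HasMean (f : ℝ → ℝ) (μ : ℝ) : Prop :=
  MeasureTheory.Integrable (fun x => x * f x) ∧ (∫ x, x * f x) = μ

/-- The density `f` (with mean `μ`) has variance `σ2`. -/
def HasVar (f : ℝ → ℝ) (μ σ2 : ℝ) : Prop :=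
  MeasureTheory.Integrable (fun x => (x - μ) ^ 2 * f x) ∧ (∫ x, (x - μ) ^ 2 * f x) = σ2

section Gaussian

variable {r : ℝ}

lemma two_le_sqrt_two_pi : 2 ≤ √(2 * π) :=
  Real.le_sqrt_of_sq_le (by nlinarith [pi_gt_three])

lemma gaussDensity_eq (hr : 0 < r) (t : ℝ) :
    gaussDensity r t = exp (-t ^ 2 / (2 * r ^ 2)) / (√(2 * π) * r) := by
  rw [gaussDensity, sqrt_mul (by positivity), sqrt_sq hr.le, inv_mul_eq_div]

lemma gaussDensity_pos (hr : 0 < r) (t : ℝ) : 0 < gaussDensity r t := by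
  rw [gaussDensity_eq hr]
  have := two_le_sqrt_two_pi
  positivity

lemma gaussDensity_le (hr : 0 < r) (t : ℝ) : gaussDensity r t ≤ 1 / (2 * r) := by
  rw [gaussDensity_eq hr]
  have hexp : exp (-t ^ 2 / (2 * r ^ 2)) ≤ 1 := exp_le_one_iff.2 (by
    have : 0 ≤ t ^ 2 / (2 * r ^ 2) := by positivity
    rw [neg_div]; linarith)
  gcongr
  · exact two_le_sqrt_two_pi

lemma abs_gaussDensity_le (hr : 0 < r) (t : ℝ) : |gaussDensity r t| ≤ 1 / (2 * r) := by
  rw [abs_of_pos (gaussDensity_pos hr t)]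
  exact gaussDensity_le hr t

lemma continuous_gaussDensity (r : ℝ) : Continuous (gaussDensity r) := by
  unfold gaussDensity
  fun_prop

/-- Beyond `|t| = T r`, half of the Gaussian exponent already gives the factor `exp (-T²/4)`. -/
lemma gaussDensity_le_of_mul_le_abs (hr : 0 < r) {T t : ℝ} (hT : 0 ≤ T) (ht : T * r ≤ |t|) :
    gaussDensity r t ≤ exp (-T ^ 2 / 4) * exp (-t ^ 2 / (4 * r ^ 2)) / (2 * r) := by
  have hTt : T ^ 2 * r ^ 2 ≤ t ^ 2 := by
    rw [← sq_abs t, ← mul_pow]; exact pow_le_pow_left₀ (by positivity) ht 2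
  have hsplit : exp (-t ^ 2 / (2 * r ^ 2))
      = exp (-t ^ 2 / (4 * r ^ 2)) * exp (-t ^ 2 / (4 * r ^ 2)) := by
    rw [← exp_add]; congr 1; field_simp; ring
  have hmono : exp (-t ^ 2 / (4 * r ^ 2)) ≤ exp (-T ^ 2 / 4) := by
    refine exp_le_exp.2 ?_
    rw [div_le_div_iff₀ (by positivity) (by norm_num)]
    nlinarith
  rw [gaussDensity_eq hr, hsplit]
  gcongr
  · exact two_le_sqrt_two_pi

lemma abs_mul_gaussDensity_le (hr : 0 < r) {T : ℝ} (hT : 0 ≤ T) (t : ℝ) :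
    |t| * gaussDensity r t ≤ T * r * gaussDensity r t + exp (-T ^ 2 / 4) := by
  have hg := gaussDensity_pos hr t
  rcases le_or_gt |t| (T * r) with ht | ht
  · nlinarith [exp_pos (-T ^ 2 / 4)]
  · have hpoly : |t| * exp (-t ^ 2 / (4 * r ^ 2)) ≤ r := by
      have h1 : |t| / r ≤ 1 + t ^ 2 / (4 * r ^ 2) := by
        rw [div_le_iff₀ hr, ← sq_abs t]
        field_simp
        nlinarith [sq_nonneg (|t| - 2 * r)]
      have h2 := add_one_le_exp (t ^ 2 / (4 * r ^ 2))
      rw [neg_div, exp_neg, ← div_eq_mul_inv, div_le_iff₀ (exp_pos _)]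
      rw [div_le_iff₀ hr] at h1
      nlinarith
    calc |t| * gaussDensity r t
        ≤ |t| * (exp (-T ^ 2 / 4) * exp (-t ^ 2 / (4 * r ^ 2)) / (2 * r)) := by
          gcongr; exact gaussDensity_le_of_mul_le_abs hr hT ht.le
      _ = exp (-T ^ 2 / 4) * (|t| * exp (-t ^ 2 / (4 * r ^ 2))) / (2 * r) := by ring
      _ ≤ exp (-T ^ 2 / 4) * r / (2 * r) := by gcongr
      _ = exp (-T ^ 2 / 4) / 2 := by field_simp
      _ ≤ T * r * gaussDensity r t + exp (-T ^ 2 / 4) := by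
          nlinarith [exp_pos (-T ^ 2 / 4), mul_nonneg (mul_nonneg hT hr.le) hg.le]

lemma sq_mul_gaussDensity_le (hr : 0 < r) {T : ℝ} (hT : 0 ≤ T) (t : ℝ) :
    t ^ 2 * gaussDensity r t ≤ T ^ 2 * r ^ 2 * gaussDensity r t + 2 * r * exp (-T ^ 2 / 4) := by
  have hg := gaussDensity_pos hr t
  rcases le_or_gt |t| (T * r) with ht | ht
  · have : t ^ 2 ≤ T ^ 2 * r ^ 2 := by
      rw [← sq_abs t, ← mul_pow]; exact pow_le_pow_left₀ (abs_nonneg t) ht 2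
    nlinarith [exp_pos (-T ^ 2 / 4), mul_pos hr (exp_pos (-T ^ 2 / 4))]
  · have hpoly : t ^ 2 * exp (-t ^ 2 / (4 * r ^ 2)) ≤ 4 * r ^ 2 := by
      have h1 := mul_exp_neg_le_exp_neg_one (t ^ 2 / (4 * r ^ 2))
      have h2 : exp (-1) ≤ 1 := exp_le_one_iff.2 (by norm_num)
      rw [← neg_div] at h1
      have h3 : t ^ 2 * exp (-t ^ 2 / (4 * r ^ 2))
          = 4 * r ^ 2 * (t ^ 2 / (4 * r ^ 2) * exp (-t ^ 2 / (4 * r ^ 2))) := by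
        field_simp
      rw [h3]
      nlinarith [sq_nonneg r]
    calc t ^ 2 * gaussDensity r t
        ≤ t ^ 2 * (exp (-T ^ 2 / 4) * exp (-t ^ 2 / (4 * r ^ 2)) / (2 * r)) := by
          gcongr; exact gaussDensity_le_of_mul_le_abs hr hT ht.le
      _ = exp (-T ^ 2 / 4) * (t ^ 2 * exp (-t ^ 2 / (4 * r ^ 2))) / (2 * r) := by ring
      _ ≤ exp (-T ^ 2 / 4) * (4 * r ^ 2) / (2 * r) := by gcongr
      _ = 2 * r * exp (-T ^ 2 / 4) := by field_simp; ring
      _ ≤ T ^ 2 * r ^ 2 * gaussDensity r t + 2 * r * exp (-T ^ 2 / 4) := by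
          nlinarith [mul_nonneg (mul_nonneg (sq_nonneg T) (sq_nonneg r)) hg.le]

noncomputable def gaussDensityDeriv (r t : ℝ) : ℝ := -(t / r ^ 2) * gaussDensity r t

noncomputable def gaussDensityDeriv2 (r t : ℝ) : ℝ :=
  (t ^ 2 / r ^ 4 - 1 / r ^ 2) * gaussDensity r t

lemma hasDerivAt_gaussDensity (hr : 0 < r) (t : ℝ) :
    HasDerivAt (gaussDensity r) (gaussDensityDeriv r t) t := by
  have h := (((hasDerivAt_pow 2 t).fun_neg.div_const (2 * r ^ 2)).exp).const_mul
    (√(2 * π * r ^ 2))⁻¹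
  refine h.congr_deriv ?_
  simp only [gaussDensityDeriv, gaussDensity]
  field_simp
  ring

lemma hasDerivAt_gaussDensityDeriv (hr : 0 < r) (t : ℝ) :
    HasDerivAt (gaussDensityDeriv r) (gaussDensityDeriv2 r t) t := by
  have h := (((hasDerivAt_id t).div_const (r ^ 2)).fun_neg).mul (hasDerivAt_gaussDensity hr t)
  refine h.congr_deriv ?_
  simp only [gaussDensityDeriv2, gaussDensityDeriv, id]
  field_simp
  ring

lemma continuous_gaussDensityDeriv (r : ℝ) : Continuous (gaussDensityDeriv r) := by
  unfold gaussDensityDeriv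
  exact (by fun_prop : Continuous fun t : ℝ => -(t / r ^ 2)).mul (continuous_gaussDensity r)

lemma continuous_gaussDensityDeriv2 (r : ℝ) : Continuous (gaussDensityDeriv2 r) := by
  unfold gaussDensityDeriv2
  exact (by fun_prop : Continuous fun t : ℝ => t ^ 2 / r ^ 4 - 1 / r ^ 2).mul
    (continuous_gaussDensity r)

lemma abs_gaussDensityDeriv_le (hr : 0 < r) {T : ℝ} (hT : 0 ≤ T) (t : ℝ) :
    |gaussDensityDeriv r t| ≤ T / r * gaussDensity r t + exp (-T ^ 2 / 4) / r ^ 2 := by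
  have h := abs_mul_gaussDensity_le hr hT t
  rw [gaussDensityDeriv, abs_mul, abs_neg, abs_div, abs_of_pos (gaussDensity_pos hr t),
    abs_of_pos (by positivity : (0 : ℝ) < r ^ 2)]
  calc |t| / r ^ 2 * gaussDensity r t = |t| * gaussDensity r t / r ^ 2 := by ring
    _ ≤ (T * r * gaussDensity r t + exp (-T ^ 2 / 4)) / r ^ 2 := by gcongr
    _ = T / r * gaussDensity r t + exp (-T ^ 2 / 4) / r ^ 2 := by field_simp

lemma abs_gaussDensityDeriv2_le (hr : 0 < r) {T : ℝ} (hT : 0 ≤ T) (t : ℝ) :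
    |gaussDensityDeriv2 r t|
      ≤ (T ^ 2 + 1) / r ^ 2 * gaussDensity r t + 2 * exp (-T ^ 2 / 4) / r ^ 3 := by
  have hg := gaussDensity_pos hr t
  have h := sq_mul_gaussDensity_le hr hT t
  have habs : |t ^ 2 / r ^ 4 - 1 / r ^ 2| ≤ t ^ 2 / r ^ 4 + 1 / r ^ 2 :=
    (abs_sub _ _).trans_eq (by rw [abs_of_nonneg (by positivity), abs_of_nonneg (by positivity)])
  rw [gaussDensityDeriv2, abs_mul, abs_of_pos hg]
  calc |t ^ 2 / r ^ 4 - 1 / r ^ 2| * gaussDensity r t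
      ≤ (t ^ 2 / r ^ 4 + 1 / r ^ 2) * gaussDensity r t := by gcongr
    _ = t ^ 2 * gaussDensity r t / r ^ 4 + gaussDensity r t / r ^ 2 := by ring
    _ ≤ (T ^ 2 * r ^ 2 * gaussDensity r t + 2 * r * exp (-T ^ 2 / 4)) / r ^ 4
          + gaussDensity r t / r ^ 2 := by gcongr
    _ = (T ^ 2 + 1) / r ^ 2 * gaussDensity r t + 2 * exp (-T ^ 2 / 4) / r ^ 3 := by
          field_simp; ring

lemma abs_gaussDensityDeriv_le_one_div_sq (hr : 0 < r) (t : ℝ) :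
    |gaussDensityDeriv r t| ≤ 1 / r ^ 2 := by
  simpa using abs_gaussDensityDeriv_le hr le_rfl t

lemma abs_gaussDensityDeriv2_le_three_div_cube (hr : 0 < r) (t : ℝ) :
    |gaussDensityDeriv2 r t| ≤ 3 / r ^ 3 :=
  calc |gaussDensityDeriv2 r t| ≤ 1 / r ^ 2 * gaussDensity r t + 2 / r ^ 3 := by
        simpa using abs_gaussDensityDeriv2_le hr le_rfl t
    _ ≤ 1 / r ^ 2 * (1 / (2 * r)) + 2 / r ^ 3 := by gcongr; exact gaussDensity_le hr t
    _ ≤ 3 / r ^ 3 := by field_simp; norm_num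

end Gaussian

section Convolution

variable {f k k' : ℝ → ℝ}

lemma integrable_mul_comp_sub (hf : Integrable f) (hk : Continuous k) {M : ℝ}
    (hM : ∀ t, |k t| ≤ M) (x : ℝ) : Integrable fun y => f y * k (x - y) := by
  simpa only [mul_comm] using hf.bdd_mul (c := M)
    (by fun_prop : Continuous fun y => k (x - y)).aestronglyMeasurable
    (ae_of_all _ fun y => hM (x - y))

lemma hasDerivAt_integral_mul_comp_sub (hf : Integrable f) (hk : ∀ t, HasDerivAt k (k' t) t)
    (hk' : Continuous k') {M M' : ℝ} (hM : ∀ t, |k t| ≤ M) (hM' : ∀ t, |k' t| ≤ M')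
    (x : ℝ) :
    HasDerivAt (fun x => ∫ y, f y * k (x - y)) (∫ y, f y * k' (x - y)) x := by
  have hkc : Continuous k := continuous_iff_continuousAt.2 fun t => (hk t).continuousAt
  refine (hasDerivAt_integral_of_dominated_loc_of_deriv_le (F' := fun z y => f y * k' (z - y))
    (bound := fun y => |f y| * M')
    univ_mem
    (Eventually.of_forall fun z => (integrable_mul_comp_sub hf hkc hM z).aestronglyMeasurable)
    (integrable_mul_comp_sub hf hkc hM x)
    (integrable_mul_comp_sub hf hk' hM' x).aestronglyMeasurable
    (ae_of_all _ fun y z _ => ?_) (hf.abs.mul_const M') (ae_of_all _ fun y z _ => ?_)).2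
  · rw [norm_mul, Real.norm_eq_abs, Real.norm_eq_abs]
    exact mul_le_mul_of_nonneg_left (hM' _) (abs_nonneg _)
  · exact ((hk (z - y)).comp z ((hasDerivAt_id z).sub_const y)).const_mul (f y) |>.congr_deriv
      (by simp)

end Convolution

section Smoothing

variable {f : ℝ → ℝ} {r : ℝ}

noncomputable def smoothedDeriv (f : ℝ → ℝ) (r x : ℝ) : ℝ :=
  ∫ y, f y * gaussDensityDeriv r (x - y)

noncomputable def smoothedDeriv2 (f : ℝ → ℝ) (r x : ℝ) : ℝ :=
  ∫ y, f y * gaussDensityDeriv2 r (x - y)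

lemma hasDerivAt_smoothed (hr : 0 < r) (hf : Integrable f) (x : ℝ) :
    HasDerivAt (smoothed f r) (smoothedDeriv f r x) x :=
  hasDerivAt_integral_mul_comp_sub hf (hasDerivAt_gaussDensity hr)
    (continuous_gaussDensityDeriv r) (abs_gaussDensity_le hr)
    (abs_gaussDensityDeriv_le_one_div_sq hr) x

lemma hasDerivAt_smoothedDeriv (hr : 0 < r) (hf : Integrable f) (x : ℝ) :
    HasDerivAt (smoothedDeriv f r) (smoothedDeriv2 f r x) x :=
  hasDerivAt_integral_mul_comp_sub hf (hasDerivAt_gaussDensityDeriv hr)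
    (continuous_gaussDensityDeriv2 r) (abs_gaussDensityDeriv_le_one_div_sq hr)
    (abs_gaussDensityDeriv2_le_three_div_cube hr) x

lemma abs_integral_mul_comp_sub_le (hr : 0 < r) (hf : IsDensity f) {k : ℝ → ℝ} {A B : ℝ}
    (hk : ∀ t, |k t| ≤ A * gaussDensity r t + B) (x : ℝ) :
    |∫ y, f y * k (x - y)| ≤ A * smoothed f r x + B := by
  obtain ⟨hf0, hfi, hf1⟩ := hf
  have hint := integrable_mul_comp_sub hfi (continuous_gaussDensity r) (abs_gaussDensity_le hr) x
  calc |∫ y, f y * k (x - y)|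
      ≤ ∫ y, (A * (f y * gaussDensity r (x - y)) + B * f y) :=
        norm_integral_le_of_norm_le (f := fun y => f y * k (x - y))
          ((hint.const_mul A).add (hfi.const_mul B)) <|
          ae_of_all _ fun y => by
            rw [Real.norm_eq_abs, abs_mul, abs_of_nonneg (hf0 y)]
            nlinarith [mul_le_mul_of_nonneg_left (hk (x - y)) (hf0 y)]
    _ = A * smoothed f r x + B := by
        rw [integral_add (hint.const_mul A) (hfi.const_mul B), integral_const_mul,
          integral_const_mul, hf1, mul_one, smoothed]

lemma smoothed_pos (hr : 0 < r) (hf : IsDensity f) (x : ℝ) : 0 < smoothed f r x := by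
  obtain ⟨hf0, hfi, hf1⟩ := hf
  have hsupp : 0 < volume (Function.support f) :=
    (integral_pos_iff_support_of_nonneg hf0 hfi).1 (by rw [hf1]; exact one_pos)
  rw [smoothed, integral_pos_iff_support_of_nonneg
    (fun y => mul_nonneg (hf0 y) (gaussDensity_pos hr _).le)
    (integrable_mul_comp_sub hfi (continuous_gaussDensity r) (abs_gaussDensity_le hr) x)]
  convert hsupp using 2
  ext y
  simp [(gaussDensity_pos hr (x - y)).ne']

lemma smoothed_le (hr : 0 < r) (hf : IsDensity f) (x : ℝ) : smoothed f r x ≤ 1 / (2 * r) := by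
  have h := abs_integral_mul_comp_sub_le hr hf (A := 0) (B := 1 / (2 * r))
    (fun t => by simpa using abs_gaussDensity_le hr t) x
  rw [zero_mul, zero_add] at h
  exact (le_abs_self _).trans h

end Smoothing

section Score

variable {f : ℝ → ℝ} {r : ℝ}

noncomputable def logInvSmoothed (f : ℝ → ℝ) (r x : ℝ) : ℝ :=
  log (1 / (r * smoothed f r x))

lemma exp_neg_logInvSmoothed (hr : 0 < r) (hf : IsDensity f) (x : ℝ) :
    exp (-logInvSmoothed f r x) = r * smoothed f r x := by
  rw [logInvSmoothed, one_div, log_inv, neg_neg, exp_log (mul_pos hr (smoothed_pos hr hf x))]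

lemma half_le_logInvSmoothed (hr : 0 < r) (hf : IsDensity f) (x : ℝ) :
    1 / 2 ≤ logInvSmoothed f r x := by
  have hpos := mul_pos hr (smoothed_pos hr hf x)
  have hle : r * smoothed f r x ≤ 1 / 2 := by
    have := mul_le_mul_of_nonneg_left (smoothed_le hr hf x) hr.le
    rw [mul_one_div, mul_comm 2 r, div_mul_cancel_left₀ hr.ne'] at this
    linarith
  have h2 : log 2 ≤ logInvSmoothed f r x :=
    log_le_log two_pos (by rw [le_div_iff₀ hpos]; linarith)
  linarith [log_two_gt_d9]

lemma abs_smoothedDeriv_le (hr : 0 < r) (hf : IsDensity f) (x : ℝ) :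
    |smoothedDeriv f r x| ≤ (2 * √(logInvSmoothed f r x) + 1) / r * smoothed f r x := by
  set L := logInvSmoothed f r x
  have hexp : exp (-(2 * √L) ^ 2 / 4) = r * smoothed f r x := by
    rw [mul_pow, sq_sqrt (by linarith [half_le_logInvSmoothed hr hf x]),
      show -(2 ^ 2 * L) / 4 = -L by ring, exp_neg_logInvSmoothed hr hf x]
  have h := abs_integral_mul_comp_sub_le hr hf
    (abs_gaussDensityDeriv_le hr (by positivity : 0 ≤ 2 * √L)) x
  rw [hexp] at h
  refine h.trans_eq ?_
  field_simp

lemma abs_smoothedDeriv2_le (hr : 0 < r) (hf : IsDensity f) (x : ℝ) :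
    |smoothedDeriv2 f r x| ≤ (4 * logInvSmoothed f r x + 3) / r ^ 2 * smoothed f r x := by
  set L := logInvSmoothed f r x
  have hsq : (2 * √L) ^ 2 = 4 * L := by
    rw [mul_pow, sq_sqrt (by linarith [half_le_logInvSmoothed hr hf x])]; ring
  have hexp : exp (-(2 * √L) ^ 2 / 4) = r * smoothed f r x := by
    rw [hsq, show -(4 * L) / 4 = -L by ring, exp_neg_logInvSmoothed hr hf x]
  have h := abs_integral_mul_comp_sub_le hr hf
    (abs_gaussDensityDeriv2_le hr (by positivity : 0 ≤ 2 * √L)) x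
  rw [hexp, hsq] at h
  refine h.trans_eq ?_
  field_simp
  ring

lemma score_eq (hr : 0 < r) (hf : Integrable f) (x : ℝ) :
    score f r x = smoothedDeriv f r x / smoothed f r x := by
  rw [score, (hasDerivAt_smoothed hr hf x).deriv]

lemma abs_score_le (hr : 0 < r) (hf : IsDensity f) (x : ℝ) :
    |score f r x| ≤ (2 * √(logInvSmoothed f r x) + 1) / r := by
  have hpos := smoothed_pos hr hf x
  rw [score_eq hr hf.2.1, abs_div, abs_of_pos hpos, div_le_iff₀ hpos]
  exact abs_smoothedDeriv_le hr hf x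

lemma hasDerivAt_score (hr : 0 < r) (hf : IsDensity f) (x : ℝ) :
    HasDerivAt (score f r) (smoothedDeriv2 f r x / smoothed f r x - score f r x ^ 2) x := by
  have hpos := smoothed_pos hr hf x
  have h := (hasDerivAt_smoothedDeriv hr hf.2.1 x).div (hasDerivAt_smoothed hr hf.2.1 x) hpos.ne'
  rw [show score f r = fun u => smoothedDeriv f r u / smoothed f r u from
    funext (score_eq hr hf.2.1)]
  refine h.congr_deriv ?_
  beta_reduce
  field_simp

lemma abs_deriv_score_le (hr : 0 < r) (hf : IsDensity f) (x : ℝ) :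
    |smoothedDeriv2 f r x / smoothed f r x - score f r x ^ 2|
      ≤ 22 * logInvSmoothed f r x / r ^ 2 := by
  set L := logInvSmoothed f r x
  have hL := half_le_logInvSmoothed hr hf x
  have hpos := smoothed_pos hr hf x
  have h2 : |smoothedDeriv2 f r x / smoothed f r x| ≤ (4 * L + 3) / r ^ 2 := by
    rw [abs_div, abs_of_pos hpos, div_le_iff₀ hpos]
    exact abs_smoothedDeriv2_le hr hf x
  have h1 : score f r x ^ 2 ≤ (4 * L + 4 * √L + 1) / r ^ 2 := by
    have := pow_le_pow_left₀ (abs_nonneg _) (abs_score_le hr hf x) 2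
    rw [sq_abs, div_pow] at this
    refine this.trans_eq ?_
    rw [add_sq, mul_pow, sq_sqrt (by linarith)]
    ring
  have hsqrt : 4 * √L ≤ 2 * L + 2 := by
    nlinarith [sq_nonneg (√L - 1), sq_sqrt (show 0 ≤ L by linarith)]
  calc |smoothedDeriv2 f r x / smoothed f r x - score f r x ^ 2|
      ≤ |smoothedDeriv2 f r x / smoothed f r x| + score f r x ^ 2 :=
        (abs_sub _ _).trans_eq (by rw [abs_of_nonneg (sq_nonneg (score f r x))])
    _ ≤ (4 * L + 3) / r ^ 2 + (4 * L + 4 * √L + 1) / r ^ 2 := add_le_add h2 h1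
    _ ≤ 22 * L / r ^ 2 := by
        rw [← add_div]
        gcongr
        linarith

lemma hasDerivAt_logInvSmoothed (hr : 0 < r) (hf : IsDensity f) (x : ℝ) :
    HasDerivAt (logInvSmoothed f r) (-score f r x) x := by
  have hpos := mul_pos hr (smoothed_pos hr hf x)
  have h := (((hasDerivAt_smoothed hr hf.2.1 x).const_mul r).log hpos.ne').neg
  rw [show logInvSmoothed f r = fun u => -log (r * smoothed f r u) from
    funext fun u => by rw [logInvSmoothed, one_div, log_inv]]
  refine h.congr_deriv ?_
  rw [score_eq hr hf.2.1, mul_div_mul_left _ _ hr.ne']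

lemma abs_sqrt_logInvSmoothed_sub_le (hr : 0 < r) (hf : IsDensity f) (x y : ℝ) :
    |√(logInvSmoothed f r y) - √(logInvSmoothed f r x)| ≤ 2 / r * |y - x| := by
  have hderiv : ∀ u, HasDerivAt (fun u => √(logInvSmoothed f r u))
      (-score f r u / (2 * √(logInvSmoothed f r u))) u := fun u =>
    (hasDerivAt_logInvSmoothed hr hf u).sqrt (by linarith [half_le_logInvSmoothed hr hf u])
  have hbound : ∀ u, |-score f r u / (2 * √(logInvSmoothed f r u))| ≤ 2 / r := fun u => by
    have hs : 1 / 2 ≤ √(logInvSmoothed f r u) :=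
      le_sqrt_of_sq_le (by linarith [half_le_logInvSmoothed hr hf u])
    rw [abs_div, abs_neg, abs_of_pos (by linarith : (0 : ℝ) < 2 * √(logInvSmoothed f r u)),
      div_le_iff₀ (by linarith)]
    refine (abs_score_le hr hf u).trans ?_
    rw [div_mul_eq_mul_div, div_le_div_iff_of_pos_right hr]
    linarith
  simpa only [Real.norm_eq_abs] using convex_univ.norm_image_sub_le_of_norm_hasDerivWithin_le
    (fun u _ => (hderiv u).hasDerivWithinAt) (fun u _ => (hbound u).trans_eq' (Real.norm_eq_abs _))
    (Set.mem_univ x) (Set.mem_univ y)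

end Score

lemma logInvSmoothed_le_two_mul {f : ℝ → ℝ} {r x ε u : ℝ} (hr : 0 < r) (hf : IsDensity f)
    (hε : 20 * |ε| * √(logInvSmoothed f r x) < r) (hu : |u - x| ≤ |ε|) :
    logInvSmoothed f r u ≤ 2 * logInvSmoothed f r x := by
  set L := logInvSmoothed f r x
  have hL := half_le_logInvSmoothed hr hf x
  have hs : 1 / 2 ≤ √L := le_sqrt_of_sq_le (by linarith)
  have hδ : 2 / r * |ε| * √L ≤ 1 / 10 := by
    rw [div_mul_eq_mul_div, div_mul_eq_mul_div, div_le_iff₀ hr]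
    linarith
  have hδ0 : 0 ≤ 2 / r * |ε| := by positivity
  have hu' : √(logInvSmoothed f r u) ≤ √L + 2 / r * |ε| := by
    have := (abs_le.1 (abs_sqrt_logInvSmoothed_sub_le hr hf x u)).2
    nlinarith [mul_le_mul_of_nonneg_left hu (by positivity : (0 : ℝ) ≤ 2 / r)]
  calc logInvSmoothed f r u = √(logInvSmoothed f r u) ^ 2 :=
        (sq_sqrt (by linarith [half_le_logInvSmoothed hr hf u])).symm
    _ ≤ (√L + 2 / r * |ε|) ^ 2 := by gcongr
    _ ≤ 2 * L := by nlinarith [sq_sqrt (show 0 ≤ L by linarith)]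

/-- Close-by scores are close: there is a universal constant `C` so that
if `(20|ε|/r)·√(log(1/(r f_r(x)))) < 1` then
`|s_r(x+ε) − s_r(x)| ≤ C·(|ε|/r²)·log(1/(r f_r(x)))`. -/
theorem close_by_scores_close :
    ∃ C : ℝ, 0 < C ∧
      ∀ (fStar : ℝ → ℝ) (r : ℝ), 0 < r → IsDensity fStar →
        ∀ x ε : ℝ, 0 < smoothed fStar r x →
          (20 * |ε| / r) * Real.sqrt (Real.log (1 / (r * smoothed fStar r x))) < 1 →
          |score fStar r (x + ε) - score fStar r x| ≤
            C * (|ε| / r ^ 2) * Real.log (1 / (r * smoothed fStar r x)) := by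
  refine ⟨44, by norm_num, fun f r hr hf x ε _ hε => ?_⟩
  change _ * √(logInvSmoothed f r x) < 1 at hε
  change _ ≤ _ * logInvSmoothed f r x
  rw [div_mul_eq_mul_div, div_lt_one hr] at hε
  have hderiv : ∀ u ∈ Set.uIcc x (x + ε),
      |smoothedDeriv2 f r u / smoothed f r u - score f r u ^ 2|
        ≤ 44 * logInvSmoothed f r x / r ^ 2 := fun u hu => by
    have hux : |u - x| ≤ |ε| := by simpa using Set.abs_sub_left_of_mem_uIcc hu
    refine (abs_deriv_score_le hr hf u).trans ?_
    rw [show 44 * logInvSmoothed f r x = 22 * (2 * logInvSmoothed f r x) by ring]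
    gcongr
    exact logInvSmoothed_le_two_mul hr hf hε hux
  have := (convex_uIcc x (x + ε)).norm_image_sub_le_of_norm_hasDerivWithin_le
    (fun u _ => (hasDerivAt_score hr hf u).hasDerivWithinAt) hderiv
    Set.left_mem_uIcc Set.right_mem_uIcc
  simp only [Real.norm_eq_abs, add_sub_cancel_left] at this
  exact this.trans_eq (by ring)
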